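/- arXiv:1907.07330 — 2 statements merged into one kernel-verified Lean document; each statement's English description precedes it below -/
import Mathlib

section
/- For every non-redundant discrete loss ℓ : ℛ → ℝ^𝒴 there exists a polyhedral loss L : ℝ^n → ℝ^𝒴, n = |𝒴|, with all components nonnegative, such that L embeds ℓ. -/
/-- The probability simplex over a finite outcome set `Y`. -/
def probSimplex (Y : Type*) [Fintype Y] : Set (Y → ℝ) :=
  {p | (∀ y, 0 ≤ p y) ∧ ∑ y, p y = 1}

/-- Expected loss `⟨p, v⟩ = ∑ y, p y * v y`. -/
def elloss {Y : Type*} [Fintype Y] (p : Y → ℝ) (v : Y → ℝ) : ℝ :=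
  ∑ y, p y * v y

/-- `u` minimizes the expected loss `⟨p, L ·⟩` over the report set. -/
def Minimizes {U Y : Type*} [Fintype Y] (p : Y → ℝ) (L : U → Y → ℝ) (u : U) : Prop :=
  ∀ u' : U, elloss p (L u) ≤ elloss p (L u')

/-- The Bayes risk `inf_u ⟨p, L u⟩`. -/
noncomputable def bayesRisk {U Y : Type*} [Fintype Y] (p : Y → ℝ) (L : U → Y → ℝ) : ℝ :=
  sInf (Set.range fun u => elloss p (L u))

/-- `L` embeds the discrete loss `ℓ`. -/
def Embeds {R Y : Type*} [Fintype Y] {d : ℕ}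
    (L : (Fin d → ℝ) → Y → ℝ) (ℓ : R → Y → ℝ) : Prop :=
  ∃ φ : R → (Fin d → ℝ), Function.Injective φ ∧ (∀ r, L (φ r) = ℓ r) ∧
    ∀ p ∈ probSimplex Y, ∀ r, Minimizes p ℓ r ↔ Minimizes p L (φ r)

/-- A polyhedral convex function: a pointwise maximum of finitely many affine functions. -/
def IsPolyhedralFn {d : ℕ} (g : (Fin d → ℝ) → ℝ) : Prop :=
  ∃ (m : ℕ) (a : Fin (m + 1) → Fin d → ℝ) (b : Fin (m + 1) → ℝ),
    ∀ x, g x = Finset.univ.sup' Finset.univ_nonempty (fun i => ∑ j, a i j * x j + b i)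

/-!
Let `R(p) = min_r ⟨p, ℓ r⟩` be the Bayes risk of `ℓ` and put `L(u)_y = u_y + t(u)` with
`t(u) = max_q (R(q) - ⟨q, u⟩)`, where `q` ranges over `0`, the point masses and the vertices of the
cells `{p ∈ Δ | r is optimal at p}`. Each cell is a polytope on which `R` is linear, so the maximum
principle for the linear function `q ↦ R(q) - ⟨q, u⟩` on the cell containing `p` gives
`R(p) ≤ ⟨p, u⟩ + t(u) = ⟨p, L(u)⟩` for every `p ∈ Δ`. As `t(ℓ r) = 0`, the report `ℓ r` attains this
lower bound exactly when `r` is optimal for `p`. The point masses make `L` nonnegative, and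
non-redundancy makes `r ↦ ℓ r` injective.
-/

open Set Filter Topology

section Polyhedron

variable {E ι : Type*} [AddCommGroup E] [Module ℝ E]

theorem finite_extremePoints_setOf_forall_nonneg [Finite ι] (f : ι → E →ᵃ[ℝ] ℝ) :
    ({x | ∀ i, 0 ≤ f i x}.extremePoints ℝ).Finite := by
  set P := {x | ∀ i, 0 ≤ f i x}
  -- Two extreme points with the same active constraints span a line along which both can move
  -- in either direction inside `P`, so they coincide.
  refine Set.Finite.of_finite_image (f := fun x => {i | f i x = 0}) (Set.toFinite _) ?_
  intro x hx x' _ hactive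
  set d := x' - x
  have hline : ∀ i (t : ℝ), f i (x + t • d) = f i x + t * (f i).linear d := fun i t => by
    rw [add_comm, ← vadd_eq_add, AffineMap.map_vadd, map_smul, vadd_eq_add, smul_eq_mul,
      add_comm]
  have hflat : ∀ i, f i x = 0 → (f i).linear d = 0 := fun i hi => by
    have hi' : f i x' = 0 := (Set.ext_iff.1 hactive i).1 hi
    rw [show d = x' -ᵥ x from rfl, AffineMap.linearMap_vsub, hi, hi', vsub_eq_sub, sub_self]
  have hnear : ∀ᶠ t in 𝓝 (0 : ℝ), x + t • d ∈ P := by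
    refine eventually_all.2 fun i => ?_
    simp only [hline]
    rcases (extremePoints_subset hx i).eq_or_lt with hi | hi
    · exact Eventually.of_forall fun t => by rw [← hi, hflat i hi.symm, mul_zero, add_zero]
    · have hcont : Continuous fun t : ℝ => f i x + t * (f i).linear d := by fun_prop
      exact (hcont.tendsto' 0 _ (by simp) |>.eventually (lt_mem_nhds hi)).mono fun _ => le_of_lt
  have hnear' : ∀ᶠ t in 𝓝 (0 : ℝ), x - t • d ∈ P := by
    simpa [sub_eq_add_neg, neg_smul] using
      (continuous_neg.tendsto' (0 : ℝ) 0 neg_zero).eventually hnear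
  obtain ⟨t, ⟨hadd, hsub⟩, ht⟩ :=
    ((hnear.and hnear').filter_mono nhdsWithin_le_nhds |>.and self_mem_nhdsWithin :
      ∀ᶠ t in 𝓝[>] (0 : ℝ), _).exists
  have hzero : t • d = 0 := by
    simpa using hx.2 hsub hadd (mem_openSegment_sub_add x (t • d))
  rw [smul_eq_zero, sub_eq_zero] at hzero
  exact (hzero.resolve_left (ne_of_gt ht)).symm

theorem IsCompact.convexHull_extremePoints_eq_of_finite [TopologicalSpace E] [T2Space E]
    [IsTopologicalAddGroup E] [ContinuousSMul ℝ E] [LocallyConvexSpace ℝ E] {s : Set E}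
    (hs : IsCompact s) (hconv : Convex ℝ s) (hfin : (s.extremePoints ℝ).Finite) :
    convexHull ℝ (s.extremePoints ℝ) = s := by
  rw [← (hfin.isClosed_convexHull (𝕜 := ℝ)).closure_eq, closure_convexHull_extremePoints hs hconv]

end Polyhedron

theorem isPolyhedralFn_sup' {d : ℕ} {ι : Type*} (s : Finset ι) (hs : s.Nonempty)
    (a : ι → Fin d → ℝ) (b : ι → ℝ) :
    IsPolyhedralFn fun x => s.sup' hs fun i => a i ⬝ᵥ x + b i := by
  obtain ⟨m, hm⟩ : ∃ m, s.card = m + 1 := Nat.exists_eq_add_one.2 hs.card_pos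
  let e : Fin (m + 1) ≃ s := (finCongr hm.symm).trans s.equivFin.symm
  refine ⟨m, fun k => a (e k), fun k => b (e k), fun x => le_antisymm ?_ ?_⟩
  · refine Finset.sup'_le _ _ fun i hi => ?_
    have := Finset.le_sup' (fun k => a (e k) ⬝ᵥ x + b (e k)) (Finset.mem_univ (e.symm ⟨i, hi⟩))
    rwa [Equiv.apply_symm_apply] at this
  · exact Finset.sup'_le _ _ fun k _ => Finset.le_sup' (fun i => a i ⬝ᵥ x + b i) (e k).2

section BayesRisk

variable {U Y : Type*} [Fintype Y]

theorem bayesRisk_le [Finite U] (p : Y → ℝ) (L : U → Y → ℝ) (u : U) :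
    bayesRisk p L ≤ elloss p (L u) :=
  csInf_le (Set.finite_range _).bddBelow ⟨u, rfl⟩

theorem Minimizes.bayesRisk_eq {p : Y → ℝ} {L : U → Y → ℝ} {u : U} (h : Minimizes p L u) :
    bayesRisk p L = elloss p (L u) :=
  IsLeast.csInf_eq ⟨⟨u, rfl⟩, by rintro _ ⟨u', rfl⟩; exact h u'⟩

theorem exists_minimizes [Finite U] [Nonempty U] (p : Y → ℝ) (L : U → Y → ℝ) :
    ∃ u, Minimizes p L u :=
  Finite.exists_min fun u => elloss p (L u)

theorem bayesRisk_zero (L : U → Y → ℝ) : bayesRisk 0 L = 0 := by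
  rcases isEmpty_or_nonempty U with hU | hU
  · simp [bayesRisk, Set.range_eq_empty]
  · simp [bayesRisk, elloss]

theorem bayesRisk_nonneg {p : Y → ℝ} {L : U → Y → ℝ} (hp : 0 ≤ p) (hL : ∀ u y, 0 ≤ L u y) :
    0 ≤ bayesRisk p L :=
  Real.sInf_nonneg <| by
    rintro _ ⟨u, rfl⟩
    exact Finset.sum_nonneg fun y _ => mul_nonneg (hp y) (hL u y)

theorem minimizes_comp_iff {V : Type*} {p : Y → ℝ} {L : U → Y → ℝ} {g : V → U}
    (hg : g.Surjective) {v : V} :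
    Minimizes p (L ∘ g) v ↔ Minimizes p L (g v) :=
  (hg.forall (p := fun u' => elloss p (L (g v)) ≤ elloss p (L u'))).symm

theorem elloss_eq_dotProduct (p v : Y → ℝ) : elloss p v = v ⬝ᵥ p :=
  dotProduct_comm p v

theorem elloss_single [DecidableEq Y] (y : Y) (v : Y → ℝ) : elloss (Pi.single y 1) v = v y := by
  rw [elloss, ← dotProduct, single_dotProduct, one_mul]

end BayesRisk

section Cells

variable {Y R : Type*} [Fintype Y] (ℓ : R → Y → ℝ)

def cell (r : R) : Set (Y → ℝ) := probSimplex Y ∩ {p | Minimizes p ℓ r}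

/-- The equation `∑ x = 1` is imposed as the two inequalities `∑ x ≥ 1` and `∑ x ≤ 1`. -/
def cellConstraint (r : R) : Y ⊕ R ⊕ Bool → (Y → ℝ) →ᵃ[ℝ] ℝ
  | .inl y => (LinearMap.proj y).toAffineMap
  | .inr (.inl r') => (dotProductBilin ℝ ℝ (ℓ r' - ℓ r)).toAffineMap
  | .inr (.inr true) => (dotProductBilin ℝ ℝ 1).toAffineMap - AffineMap.const ℝ _ 1
  | .inr (.inr false) => AffineMap.const ℝ _ 1 - (dotProductBilin ℝ ℝ 1).toAffineMap

theorem cell_eq_setOf_forall_nonneg (r : R) :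
    cell ℓ r = {x | ∀ i, 0 ≤ cellConstraint ℓ r i x} := by
  ext x
  simp only [cell, probSimplex, Minimizes, elloss_eq_dotProduct, mem_inter_iff, mem_ofPred_eq,
    Sum.forall, Bool.forall_bool, cellConstraint, le_antisymm_iff, sub_nonneg, map_sub,
    LinearMap.coe_toAffineMap, LinearMap.coe_proj, Function.eval, LinearMap.sub_apply,
    dotProductBilin_apply_apply, AffineMap.coe_sub, AffineMap.coe_const, Function.const_one,
    Pi.sub_apply, Pi.one_apply, one_dotProduct]
  tauto

theorem convex_cell (r : R) : Convex ℝ (cell ℓ r) := by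
  rw [cell_eq_setOf_forall_nonneg, ofPred_forall]
  exact convex_iInter fun i => (convex_Ici 0).affine_preimage (cellConstraint ℓ r i)

theorem isCompact_cell (r : R) : IsCompact (cell ℓ r) := by
  refine (isCompact_stdSimplex ℝ Y).of_isClosed_subset ?_ inter_subset_left
  rw [cell_eq_setOf_forall_nonneg, ofPred_forall]
  exact isClosed_iInter fun i =>
    isClosed_le continuous_const (cellConstraint ℓ r i).continuous_of_finiteDimensional

variable [Finite R]

theorem finite_extremePoints_cell (r : R) : ((cell ℓ r).extremePoints ℝ).Finite := by
  rw [cell_eq_setOf_forall_nonneg]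
  exact finite_extremePoints_setOf_forall_nonneg _

theorem convexHull_extremePoints_cell (r : R) :
    convexHull ℝ ((cell ℓ r).extremePoints ℝ) = cell ℓ r :=
  (isCompact_cell ℓ r).convexHull_extremePoints_eq_of_finite (convex_cell ℓ r)
    (finite_extremePoints_cell ℓ r)

end Cells

section Surrogate

variable {Y R : Type*} [Fintype Y] [Finite R] (ℓ : R → Y → ℝ)

open Classical in
def riskVertices : Set (Y → ℝ) :=
  insert 0 (range (fun y => Pi.single y 1) ∪ ⋃ r, (cell ℓ r).extremePoints ℝ)

theorem finite_riskVertices : (riskVertices ℓ).Finite :=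
  ((finite_range _).union (finite_iUnion (finite_extremePoints_cell ℓ))).insert 0

theorem toFinset_nonempty_riskVertices : (finite_riskVertices ℓ).toFinset.Nonempty :=
  ⟨0, (finite_riskVertices ℓ).mem_toFinset.2 (mem_insert 0 _)⟩

theorem exists_mem_riskVertices_le [Nonempty R] {p : Y → ℝ} (hp : p ∈ probSimplex Y)
    (u : Y → ℝ) :
    ∃ q ∈ riskVertices ℓ, bayesRisk p ℓ - elloss p u ≤ bayesRisk q ℓ - elloss q u := by
  obtain ⟨r, hr⟩ := exists_minimizes p ℓ
  have hp_cell : p ∈ convexHull ℝ ((cell ℓ r).extremePoints ℝ) := by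
    rw [convexHull_extremePoints_cell]
    exact ⟨hp, hr⟩
  have hconv : ConvexOn ℝ univ fun x : Y → ℝ => elloss x (ℓ r) - elloss x u := by
    simp only [elloss_eq_dotProduct, ← sub_dotProduct]
    exact (dotProductBilin ℝ ℝ (ℓ r - u)).convexOn convex_univ
  obtain ⟨q, hq, hpq⟩ := hconv.exists_ge_of_mem_convexHull (subset_univ _) hp_cell
  refine ⟨q, mem_insert_of_mem _ (Or.inr (mem_iUnion.2 ⟨r, hq⟩)), ?_⟩
  rwa [hr.bayesRisk_eq, (extremePoints_subset hq).2.bayesRisk_eq]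

noncomputable def bayesRiskConj (u : Y → ℝ) : ℝ :=
  (finite_riskVertices ℓ).toFinset.sup' (toFinset_nonempty_riskVertices ℓ)
    fun q => bayesRisk q ℓ - elloss q u

theorem le_bayesRiskConj {q : Y → ℝ} (hq : q ∈ riskVertices ℓ) (u : Y → ℝ) :
    bayesRisk q ℓ - elloss q u ≤ bayesRiskConj ℓ u :=
  Finset.le_sup' (fun q => bayesRisk q ℓ - elloss q u) ((finite_riskVertices ℓ).mem_toFinset.2 hq)

theorem bayesRiskConj_self (r : R) : bayesRiskConj ℓ (ℓ r) = 0 := by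
  refine le_antisymm (Finset.sup'_le _ _ fun q _ => sub_nonpos.2 (bayesRisk_le q ℓ r)) ?_
  simpa [bayesRisk_zero, elloss] using le_bayesRiskConj ℓ (mem_insert 0 _) (ℓ r)

theorem bayesRisk_le_elloss_add_bayesRiskConj [Nonempty R] {p : Y → ℝ} (hp : p ∈ probSimplex Y)
    (u : Y → ℝ) : bayesRisk p ℓ ≤ elloss p u + bayesRiskConj ℓ u := by
  obtain ⟨q, hq, hpq⟩ := exists_mem_riskVertices_le ℓ hp u
  linarith [le_bayesRiskConj ℓ hq u]

noncomputable def conjSurrogate (u : Y → ℝ) (y : Y) : ℝ := u y + bayesRiskConj ℓ u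

theorem conjSurrogate_nonneg (hℓ : ∀ r y, 0 ≤ ℓ r y) (u : Y → ℝ) (y : Y) :
    0 ≤ conjSurrogate ℓ u y := by
  classical
  have hrisk : 0 ≤ bayesRisk (Pi.single y 1) ℓ :=
    bayesRisk_nonneg (Pi.single_nonneg.2 zero_le_one) hℓ
  have hconj := le_bayesRiskConj ℓ (mem_insert_of_mem _ (Or.inl ⟨y, rfl⟩)) u
  rw [elloss_single] at hconj
  rw [conjSurrogate]
  linarith

theorem conjSurrogate_self (r : R) : conjSurrogate ℓ (ℓ r) = ℓ r := by
  ext y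
  rw [conjSurrogate, bayesRiskConj_self, add_zero]

theorem elloss_conjSurrogate {p : Y → ℝ} (hp : p ∈ probSimplex Y) (u : Y → ℝ) :
    elloss p (conjSurrogate ℓ u) = elloss p u + bayesRiskConj ℓ u := by
  simp only [elloss, conjSurrogate, mul_add, Finset.sum_add_distrib, ← Finset.sum_mul, hp.2,
    one_mul]

theorem minimizes_conjSurrogate_iff {p : Y → ℝ} (hp : p ∈ probSimplex Y) (r : R) :
    Minimizes p (conjSurrogate ℓ) (ℓ r) ↔ Minimizes p ℓ r := by
  have : Nonempty R := ⟨r⟩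
  refine ⟨fun h r' => by simpa only [conjSurrogate_self] using h (ℓ r'), fun h u => ?_⟩
  rw [conjSurrogate_self, elloss_conjSurrogate ℓ hp, ← h.bayesRisk_eq]
  exact bayesRisk_le_elloss_add_bayesRiskConj ℓ hp u

theorem isPolyhedralFn_conjSurrogate_comp {d : ℕ} (e : Y ≃ Fin d) (y : Y) :
    IsPolyhedralFn fun u : Fin d → ℝ => conjSurrogate ℓ (u ∘ e) y := by
  classical
  convert isPolyhedralFn_sup' _ (toFinset_nonempty_riskVertices ℓ)
    (fun q => Pi.single (e y) 1 - q ∘ e.symm) (fun q => bayesRisk q ℓ) using 2 with u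
  rw [conjSurrogate, bayesRiskConj, Finset.add_sup']
  refine Finset.sup'_congr _ rfl fun q _ => ?_
  rw [sub_dotProduct, single_dotProduct, elloss_eq_dotProduct, dotProduct_comm,
    ← dotProduct_comp_equiv_symm]
  simp only [Function.comp_apply, one_mul, Equiv.symm_symm]
  ring

end Surrogate

/-- Every non-redundant discrete loss is embedded by a polyhedral loss on
`ℝ^n`, `n = |𝒴|`, with nonnegative components. -/
theorem discrete_loss_embedded_by_polyhedral
    {Y R : Type*} [Fintype Y] [Fintype R]
    (ℓ : R → Y → ℝ) (hℓ0 : ∀ r y, 0 ≤ ℓ r y)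
    (hnonred : ∀ r : R, ∃ p ∈ probSimplex Y,
      ∀ r' : R, r' ≠ r → elloss p (ℓ r) < elloss p (ℓ r')) :
    ∃ L : (Fin (Fintype.card Y) → ℝ) → Y → ℝ,
      (∀ u y, 0 ≤ L u y) ∧ (∀ y, IsPolyhedralFn (fun u => L u y)) ∧ Embeds L ℓ := by
  let e := Fintype.equivFin Y
  have hℓ_inj : Function.Injective ℓ := fun r r' hrr' => by
    by_contra hne
    obtain ⟨p, -, hp⟩ := hnonred r
    exact (hp r' (Ne.symm hne)).ne (by rw [hrr'])
  refine ⟨fun u => conjSurrogate ℓ (u ∘ e), fun u => conjSurrogate_nonneg ℓ hℓ0 _,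
    isPolyhedralFn_conjSurrogate_comp ℓ e, fun r => ℓ r ∘ e.symm,
    e.symm.surjective.injective_comp_right.comp hℓ_inj, fun r => ?_, fun p hp r => ?_⟩
  · simp [Function.comp_assoc, conjSurrogate_self]
  · have h := minimizes_comp_iff (p := p) (L := conjSurrogate ℓ) (v := ℓ r ∘ e.symm)
      e.injective.surjective_comp_right
    rw [Function.comp_assoc, e.symm_comp_self, Function.comp_id] at h
    exact (minimizes_conjSurrogate_iff ℓ hp r).symm.trans h.symm
end

section
/- Let L : ℝ^d → ℝ^𝒴 be a loss such that Γ(p) = argmin_{u∈ℝ^d} ⟨p, L(u)⟩ is nonempty for every p ∈ Δ_𝒴, and for u ∈ ℝ^d write Γ_u = {p ∈ Δ_𝒴 : u ∈ Γ(p)}. Then the following are equivalent: (1) there exist a finite set ℛ, an injective map φ : ℛ → ℝ^d, and a map γ from Δ_𝒴 to nonempty subsets of ℛ such that for all p ∈ Δ_𝒴 and r ∈ ℛ, r ∈ γ(p) if and only if φ(r) ∈ Γ(p); (2) there exist finitely many points u_1, …, u_m ∈ ℝ^d such that each level set Γ_{u_i} has nonempty interior relative to the affine hull of Δ_𝒴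 and Γ_{u_1} ∪ ⋯ ∪ Γ_{u_m} = Δ_𝒴. -/
/-! Both conditions say that finitely many reports have level sets covering the simplex; the
second asks in addition that each of them be full-dimensional. Level sets are closed, and in the
hyperplane `∑ q = 1` a finite union of closed sets with empty interior has empty interior. Since the
simplex is the closure of its relative interior, the full-dimensional level sets of any finite
cover therefore cover it already. -/

open Set Filter Topology

section FiniteUnion

variable {X ι : Type*} [TopologicalSpace X]

theorem interior_biUnion_eq_empty_of_isClosed {s : Set ι} (hs : s.Finite) {f : ι → Set X}
    (hc : ∀ i ∈ s, IsClosed (f i)) (he : ∀ i ∈ s, interior (f i) = ∅) :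
    interior (⋃ i ∈ s, f i) = ∅ := by
  induction s, hs using Set.Finite.induction_on with
  | empty => simp
  | @insert a s _ _ ih =>
    rw [biUnion_insert, interior_union_isClosed_of_interior_empty (hc a (mem_insert a s))
      (ih (fun i hi => hc i (mem_insert_of_mem a hi)) (fun i hi => he i (mem_insert_of_mem a hi)))]
    exact he a (mem_insert a s)

theorem subset_biUnion_nonempty_interior_of_isClosed {D : Set X}
    (hD : D ⊆ closure (interior D)) {s : Set ι} (hs : s.Finite) {f : ι → Set X}
    (hc : ∀ i ∈ s, IsClosed (f i)) (hcov : D ⊆ ⋃ i ∈ s, f i) :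
    D ⊆ ⋃ i ∈ {i ∈ s | (interior (f i)).Nonempty}, f i := by
  set F := ⋃ i ∈ {i ∈ s | (interior (f i)).Nonempty}, f i
  set T := ⋃ i ∈ {i ∈ s | ¬(interior (f i)).Nonempty}, f i
  have hF : IsClosed F := (hs.subset (sep_subset _ _)).isClosed_biUnion fun i hi => hc i hi.1
  have hT : interior T = ∅ := interior_biUnion_eq_empty_of_isClosed (hs.subset (sep_subset _ _))
    (fun i hi => hc i hi.1) (fun i hi => not_nonempty_iff_eq_empty.1 hi.2)
  have hDFT : D ⊆ F ∪ T := by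
    intro x hx
    obtain ⟨i, hi, hxi⟩ := mem_iUnion₂.1 (hcov hx)
    by_cases h : (interior (f i)).Nonempty
    · exact Or.inl (mem_biUnion ⟨hi, h⟩ hxi)
    · exact Or.inr (mem_biUnion ⟨hi, h⟩ hxi)
  have hint : interior D ⊆ F :=
    calc interior D ⊆ interior (F ∪ T) := interior_mono hDFT
      _ = interior F := interior_union_isClosed_of_interior_empty hF hT
      _ ⊆ F := interior_subset
  exact hD.trans (closure_minimal hint hF)

end FiniteUnion

theorem exists_ball_inter_subset_of_interior_nonempty {E : Type*} [PseudoMetricSpace E]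
    {V A : Set E} (h : (interior (Subtype.val ⁻¹' A : Set V)).Nonempty) :
    ∃ p ∈ A, ∃ ε > 0, Metric.ball p ε ∩ V ⊆ A := by
  obtain ⟨x, hx⟩ := h
  have hA : A ∈ 𝓝[V] (x : E) :=
    preimage_coe_mem_nhds_subtype.1 (mem_interior_iff_mem_nhds.1 hx)
  exact ⟨x, interior_subset (s := Subtype.val ⁻¹' A) hx, Metric.mem_nhdsWithin_iff.1 hA⟩

section Simplex

variable {Y : Type*} [Fintype Y]

def sumOneHyperplane (Y : Type*) [Fintype Y] : Set (Y → ℝ) :=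
  {q | ∑ y, q y = 1}

theorem continuous_elloss (v : Y → ℝ) : Continuous fun p : Y → ℝ => elloss p v := by
  unfold elloss
  fun_prop

theorem isClosed_probSimplex : IsClosed (probSimplex Y) := by
  simp only [probSimplex, ofPred_and, ofPred_forall]
  exact (isClosed_iInter fun y => isClosed_le continuous_const (continuous_apply y)).inter
    (isClosed_eq (by fun_prop) continuous_const)

/-- Every point of the simplex is a limit of points `(1 - t) p + t z`, `t ↓ 0`, moving towards
the barycenter `z`; these have positive coordinates, hence lie in the relative interior. -/
theorem probSimplex_subset_closure_interior :
    (Subtype.val ⁻¹' probSimplex Y : Set (sumOneHyperplane Y)) ⊆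
      closure (interior (Subtype.val ⁻¹' probSimplex Y)) := by
  intro p hp
  have hsum : ∀ q : sumOneHyperplane Y, ∑ y, (q : Y → ℝ) y = 1 := fun q => q.2
  obtain ⟨y₀, -, -⟩ := Finset.exists_ne_zero_of_sum_ne_zero ((hsum p).symm ▸ one_ne_zero)
  have : Nonempty Y := ⟨y₀⟩
  have hcard : (Fintype.card Y : ℝ) ≠ 0 := Nat.cast_ne_zero.2 Fintype.card_ne_zero
  set z : Y → ℝ := fun _ => (Fintype.card Y : ℝ)⁻¹
  have hz : ∑ y, z y = 1 := by simp [z, hcard]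
  let c : ℝ → sumOneHyperplane Y := fun t => ⟨(1 - t) • (p : Y → ℝ) + t • z, by
    simp only [sumOneHyperplane, mem_ofPred_eq, Pi.add_apply, Pi.smul_apply, smul_eq_mul,
      Finset.sum_add_distrib, ← Finset.mul_sum, hsum p, hz]
    ring⟩
  have hc : Continuous c := Continuous.subtype_mk (by fun_prop) _
  have hc0 : c 0 = p := Subtype.ext (by simp [c])
  have hpos : IsOpen {q : sumOneHyperplane Y | ∀ y, 0 < (q : Y → ℝ) y} := by
    simp only [ofPred_forall]
    exact isOpen_iInter_of_finite fun y => isOpen_lt continuous_const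
      ((continuous_apply y).comp continuous_subtype_val)
  have hpos_sub : {q : sumOneHyperplane Y | ∀ y, 0 < (q : Y → ℝ) y} ⊆
      interior (Subtype.val ⁻¹' probSimplex Y) :=
    interior_maximal (fun q hq => ⟨fun y => (hq y).le, hsum q⟩) hpos
  have hct : ∀ t ∈ Ioo (0 : ℝ) 1, c t ∈ interior (Subtype.val ⁻¹' probSimplex Y) := by
    intro t ht
    refine hpos_sub fun y => ?_
    have : 0 ≤ (1 - t) * (p : Y → ℝ) y := mul_nonneg (by linarith [ht.2]) (hp.1 y)
    have : 0 < t * z y := mul_pos ht.1 (by positivity)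
    simp only [c, Pi.add_apply, Pi.smul_apply, smul_eq_mul]
    linarith
  exact mem_closure_of_tendsto ((hc0 ▸ hc.tendsto 0).mono_left nhdsWithin_le_nhds)
    (eventually_of_mem (Ioo_mem_nhdsGT one_pos) hct)

end Simplex

section LevelSets

variable {Y U : Type*} [Fintype Y] (L : U → Y → ℝ)

def levelSet (u : U) : Set (Y → ℝ) :=
  {q ∈ probSimplex Y | Minimizes q L u}

theorem isClosed_levelSet (u : U) : IsClosed (levelSet L u) := by
  show IsClosed (probSimplex Y ∩ {q | Minimizes q L u})
  refine isClosed_probSimplex.inter ?_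
  simp only [Minimizes, ofPred_forall]
  exact isClosed_iInter fun u' => isClosed_le (continuous_elloss _) (continuous_elloss _)

theorem iUnion_levelSet_eq_probSimplex_iff {ι : Type*} (u : ι → U) :
    ⋃ i, levelSet L (u i) = probSimplex Y ↔ ∀ p ∈ probSimplex Y, ∃ i, Minimizes p L (u i) := by
  constructor
  · intro h p hp
    obtain ⟨i, -, hi⟩ := mem_iUnion.1 (h ▸ hp)
    exact ⟨i, hi⟩
  · intro h
    refine Subset.antisymm (iUnion_subset fun i => sep_subset _ _) fun p hp => ?_
    obtain ⟨i, hi⟩ := h p hp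
    exact mem_iUnion.2 ⟨i, hp, hi⟩

theorem exists_fullDim_subcover {R : Set U} (hR : R.Finite)
    (hcov : ∀ p ∈ probSimplex Y, ∃ u ∈ R, Minimizes p L u) :
    ∃ R' ⊆ R, (∀ u ∈ R', ∃ p ∈ levelSet L u, ∃ ε > 0,
        Metric.ball p ε ∩ sumOneHyperplane Y ⊆ levelSet L u) ∧
      ∀ p ∈ probSimplex Y, ∃ u ∈ R', Minimizes p L u := by
  have hcov' : (Subtype.val ⁻¹' probSimplex Y : Set (sumOneHyperplane Y)) ⊆
      ⋃ u ∈ R, Subtype.val ⁻¹' levelSet L u := by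
    intro p hp
    obtain ⟨u, hu, hmin⟩ := hcov p hp
    exact mem_biUnion hu ⟨hp, hmin⟩
  have hfat := subset_biUnion_nonempty_interior_of_isClosed probSimplex_subset_closure_interior
    hR (fun u _ => (isClosed_levelSet L u).preimage continuous_subtype_val) hcov'
  refine ⟨_, sep_subset _ _, fun u hu => exists_ball_inter_subset_of_interior_nonempty hu.2,
    fun p hp => ?_⟩
  obtain ⟨u, hu, -, hmin⟩ := mem_iUnion₂.1 (hfat (a := ⟨p, hp.2⟩) hp)
  exact ⟨u, hu, hmin⟩

end LevelSets

theorem exists_fin_injective_iff_finite {α β : Type*} {S : Set β} {Q : β → α → Prop} :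
    (∃ (m : ℕ) (φ : Fin m → α) (γ : β → Set (Fin m)), Function.Injective φ ∧
        (∀ p ∈ S, (γ p).Nonempty) ∧ ∀ p ∈ S, ∀ r, r ∈ γ p ↔ Q p (φ r)) ↔
      ∃ R : Set α, R.Finite ∧ ∀ p ∈ S, ∃ u ∈ R, Q p u := by
  constructor
  · rintro ⟨m, φ, γ, -, hne, hiff⟩
    refine ⟨range φ, finite_range φ, fun p hp => ?_⟩
    obtain ⟨r, hr⟩ := hne p hp
    exact ⟨φ r, mem_range_self r, (hiff p hp r).1 hr⟩
  · rintro ⟨R, hR, hcov⟩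
    obtain ⟨m, φ, hinj, rfl⟩ := hR.fin_param
    refine ⟨m, φ, fun p => {r | Q p (φ r)}, hinj, fun p hp => ?_, fun _ _ _ => Iff.rfl⟩
    obtain ⟨_, ⟨r, rfl⟩, hr⟩ := hcov p hp
    exact ⟨r, hr⟩

theorem embeds_finite_property_iff_full_dim_cover_general
    {Y : Type*} [Fintype Y] {d : ℕ}
    (L : (Fin d → ℝ) → Y → ℝ) :
    (∃ (m : ℕ) (φ : Fin m → (Fin d → ℝ)) (γ : (Y → ℝ) → Set (Fin m)),
        Function.Injective φ ∧ (∀ p ∈ probSimplex Y, (γ p).Nonempty) ∧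
        (∀ p ∈ probSimplex Y, ∀ r : Fin m, r ∈ γ p ↔ Minimizes p L (φ r))) ↔
    (∃ (m : ℕ) (u : Fin m → (Fin d → ℝ)),
        (∀ i : Fin m, ∃ p ∈ {q ∈ probSimplex Y | Minimizes q L (u i)}, ∃ ε > 0,
          ∀ q : Y → ℝ, ∑ y, q y = 1 → dist q p < ε →
            q ∈ {q' ∈ probSimplex Y | Minimizes q' L (u i)}) ∧
        (⋃ i : Fin m, {q ∈ probSimplex Y | Minimizes q L (u i)}) = probSimplex Y) := by
  rw [exists_fin_injective_iff_finite]
  constructor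
  · rintro ⟨R, hR, hcov⟩
    obtain ⟨R', hR'R, hfat, hcov'⟩ := exists_fullDim_subcover L hR hcov
    obtain ⟨m, u, -, rfl⟩ := (hR.subset hR'R).fin_param
    refine ⟨m, u, fun i => ?_, (iUnion_levelSet_eq_probSimplex_iff L u).2 fun p hp => ?_⟩
    · obtain ⟨p, hp, ε, hε, hball⟩ := hfat _ (mem_range_self i)
      exact ⟨p, hp, ε, hε, fun q hq hqp => hball ⟨hqp, hq⟩⟩
    · exact exists_range_iff.1 (hcov' p hp)
  · rintro ⟨m, u, -, hcov⟩
    exact ⟨range u, finite_range u,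
      fun p hp => exists_range_iff.2 ((iUnion_levelSet_eq_probSimplex_iff L u).1 hcov p hp)⟩

/-- For a loss `L` whose set of minimizers `Γ(p)` is nonempty for each `p` in
the simplex, the following are equivalent: (1) there are finitely many points `φ r` (injective)
and a nonempty-valued assignment `γ` with `r ∈ γ(p) ↔ φ r ∈ Γ(p)`; (2) there are finitely many
points `u₁, …, u_m` whose level sets `Γ_{uᵢ}` are full-dimensional (nonempty interior relative
to the affine hull of the simplex) and cover the simplex. -/
theorem embeds_finite_property_iff_full_dim_cover
    {Y : Type*} [Fintype Y] {d : ℕ}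
    (L : (Fin d → ℝ) → Y → ℝ) (hL0 : ∀ u y, 0 ≤ L u y)
    (hatt : ∀ p ∈ probSimplex Y, ∃ u, Minimizes p L u) :
    (∃ (m : ℕ) (φ : Fin m → (Fin d → ℝ)) (γ : (Y → ℝ) → Set (Fin m)),
        Function.Injective φ ∧ (∀ p ∈ probSimplex Y, (γ p).Nonempty) ∧
        (∀ p ∈ probSimplex Y, ∀ r : Fin m, r ∈ γ p ↔ Minimizes p L (φ r))) ↔
    (∃ (m : ℕ) (u : Fin m → (Fin d → ℝ)),
        (∀ i : Fin m, ∃ p ∈ {q ∈ probSimplex Y | Minimizes q L (u i)}, ∃ ε > 0,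
          ∀ q : Y → ℝ, ∑ y, q y = 1 → dist q p < ε →
            q ∈ {q' ∈ probSimplex Y | Minimizes q' L (u i)}) ∧
        (⋃ i : Fin m, {q ∈ probSimplex Y | Minimizes q L (u i)}) = probSimplex Y) :=
  embeds_finite_property_iff_full_dim_cover_general L
end
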